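/- Assume the noise-free model b = A x̄ (i.e., z = 0), let δ' ∈ (0,1) and γ > (1+δ')/(1−δ'), and let s̃ ≥ 1 be an integer with ρ₋(A, s̄+s̃) > 0. Set λ₀ = ‖Aᵀb‖_∞ and assume λ₀ > 0, let η ∈ (0,1) and K ∈ ℕ, and set λ = η^{K+1}λ₀. If x̂ ∈ ℝⁿ satisfies ‖x̂_{S̄ᶜ}‖₀ ≤ s̃ and ω_λ(x̂) ≤ δ'λ, then ‖x̂ − x̄‖₂ ≤ η^{K+1} · 2λ₀√s̄ / ρ₋(A, s̄+s̃). -/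

import Mathlib

open scoped BigOperators
open Matrix

noncomputable section

namespace PGH

/-- Euclidean dot product on `Fin n → ℝ`. -/
def dot {n : ℕ} (x y : Fin n → ℝ) : ℝ := ∑ i, x i * y i

/-- Squared Euclidean norm. -/
def sqnorm {n : ℕ} (x : Fin n → ℝ) : ℝ := ∑ i, (x i) ^ 2

/-- Euclidean (ℓ₂) norm. -/
noncomputable def l2 {n : ℕ} (x : Fin n → ℝ) : ℝ := Real.sqrt (sqnorm x)

/-- ℓ₁ norm. -/
def l1 {n : ℕ} (x : Fin n → ℝ) : ℝ := ∑ i, |x i|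

/-- ℓ∞ norm (maximum absolute coordinate). -/
noncomputable def linf {n : ℕ} (x : Fin n → ℝ) : ℝ := ⨆ i, |x i|

/-- Support of a vector. -/
def supp {n : ℕ} (x : Fin n → ℝ) : Finset (Fin n) := Finset.univ.filter (fun i => x i ≠ 0)

/-- Number of nonzero coordinates. -/
def l0 {n : ℕ} (x : Fin n → ℝ) : ℕ := (supp x).card

/-- Number of nonzero coordinates within the index set `S`
(i.e. `‖x_S‖₀` for the restriction of `x` to `S`). -/
def l0on {n : ℕ} (S : Finset (Fin n)) (x : Fin n → ℝ) : ℕ :=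
  (S.filter (fun i => x i ≠ 0)).card

/-- ℓ₁ norm of the restriction of `x` to the index set `S`. -/
def l1on {n : ℕ} (S : Finset (Fin n)) (x : Fin n → ℝ) : ℝ := ∑ i ∈ S, |x i|

/-- Gradient of `f(x) = (1/2)‖Ax - b‖₂²`, namely `Aᵀ(Ax - b)`. -/
def grad {m n : ℕ} (A : Matrix (Fin m) (Fin n) ℝ) (b : Fin m → ℝ) (x : Fin n → ℝ) :
    Fin n → ℝ :=
  Aᵀ.mulVec (A.mulVec x - b)

/-- Least-squares objective `f(x) = (1/2)‖Ax - b‖₂²`. -/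
def fls {m n : ℕ} (A : Matrix (Fin m) (Fin n) ℝ) (b : Fin m → ℝ) (x : Fin n → ℝ) : ℝ :=
  sqnorm (A.mulVec x - b) / 2

/-- ℓ₁-regularized least-squares objective `φ_λ(x) = f(x) + λ‖x‖₁`. -/
def phi {m n : ℕ} (A : Matrix (Fin m) (Fin n) ℝ) (b : Fin m → ℝ) (lam : ℝ)
    (x : Fin n → ℝ) : ℝ :=
  fls A b x + lam * l1 x

/-- Restricted maximal eigenvalue `ρ₊(A, s)`. -/
noncomputable def rhoPlus {m n : ℕ} (A : Matrix (Fin m) (Fin n) ℝ) (s : ℕ) : ℝ :=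
  sSup {r | ∃ x : Fin n → ℝ, x ≠ 0 ∧ l0 x ≤ s ∧ r = sqnorm (A.mulVec x) / sqnorm x}

/-- Restricted minimal eigenvalue `ρ₋(A, s)`. -/
noncomputable def rhoMinus {m n : ℕ} (A : Matrix (Fin m) (Fin n) ℝ) (s : ℕ) : ℝ :=
  sInf {r | ∃ x : Fin n → ℝ, x ≠ 0 ∧ l0 x ≤ s ∧ r = sqnorm (A.mulVec x) / sqnorm x}

/-- `ξ` is a subgradient of the ℓ₁ norm at `x`. -/
def IsSubgrad {n : ℕ} (x ξ : Fin n → ℝ) : Prop :=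
  ∀ i, (x i ≠ 0 → ξ i = Real.sign (x i)) ∧ (x i = 0 → |ξ i| ≤ 1)

/-- Optimality residue `ω_λ(x) = min_{ξ ∈ ∂‖x‖₁} ‖Aᵀ(Ax−b) + λξ‖_∞`. -/
noncomputable def omega {m n : ℕ} (A : Matrix (Fin m) (Fin n) ℝ) (b : Fin m → ℝ)
    (lam : ℝ) (x : Fin n → ℝ) : ℝ :=
  sInf {r | ∃ ξ : Fin n → ℝ, IsSubgrad x ξ ∧
    r = linf (fun i => grad A b x i + lam * ξ i)}

/-- The local model `ψ_{λ,L}(y; x)`. -/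
def psi {m n : ℕ} (A : Matrix (Fin m) (Fin n) ℝ) (b : Fin m → ℝ) (lam L : ℝ)
    (y x : Fin n → ℝ) : ℝ :=
  fls A b y + dot (grad A b y) (x - y) + L / 2 * sqnorm (x - y) + lam * l1 x

/-- The noise-domination condition
`λ ≥ max{4, (γ+1)/((1−δ')γ−(1+δ'))} ⬝ ‖Aᵀz‖_∞`. -/
def noiseCond {m n : ℕ} (A : Matrix (Fin m) (Fin n) ℝ) (z : Fin m → ℝ)
    (dp gam lam : ℝ) : Prop :=
  lam ≥ max 4 ((gam + 1) / ((1 - dp) * gam - (1 + dp))) * linf (Aᵀ.mulVec z)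

/-!
Write `h = x̂ - x̄` and `S = supp x̄`. Since `b = A x̄`, the gradient at `x̂` is `Aᵀ A h`, so for
every subgradient `ξ` of `‖·‖₁` at `x̂`
`‖A h‖² = ⟨h, ∇f(x̂) + λ ξ⟩ - λ ⟨h, ξ⟩ ≤ ‖h‖₁ ‖∇f(x̂) + λ ξ‖_∞ - λ (‖h_{Sᶜ}‖₁ - ‖h_S‖₁)`,
because `h = x̂` off `S`, where `ξ = sign x̂`. Minimising over `ξ` and using
`ω_λ(x̂) ≤ δ' λ ≤ λ` leaves `‖A h‖² ≤ 2 λ ‖h_S‖₁ ≤ 2 λ √s̄ ‖h‖₂`. As `h` has at most `s̄ + s̃`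
nonzero entries, `ρ₋ ‖h‖₂² ≤ ‖A h‖²`, and dividing by `‖h‖₂` gives the bound.
-/

lemma dot_eq_dotProduct {n : ℕ} (x y : Fin n → ℝ) : dot x y = x ⬝ᵥ y := rfl

lemma dot_self {n : ℕ} (x : Fin n → ℝ) : dot x x = sqnorm x := by
  simp only [dot, sqnorm, sq]

lemma dot_transpose_mulVec {m n : ℕ} (A : Matrix (Fin m) (Fin n) ℝ) (h : Fin n → ℝ)
    (v : Fin m → ℝ) : dot h (Aᵀ *ᵥ v) = dot (A *ᵥ h) v := by
  rw [dot_eq_dotProduct, dotProduct_mulVec, vecMul_transpose, dot_eq_dotProduct]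

lemma dot_add_const_mul {n : ℕ} (h g ξ : Fin n → ℝ) (lam : ℝ) :
    dot h (fun i => g i + lam * ξ i) = dot h g + lam * dot h ξ := by
  simp only [dot, Finset.mul_sum, ← Finset.sum_add_distrib]
  exact Finset.sum_congr rfl fun i _ => by ring

lemma sqnorm_nonneg {n : ℕ} (x : Fin n → ℝ) : 0 ≤ sqnorm x :=
  Finset.sum_nonneg fun _ _ => sq_nonneg _

lemma l2_nonneg {n : ℕ} (x : Fin n → ℝ) : 0 ≤ l2 x := Real.sqrt_nonneg _

lemma l2_sq {n : ℕ} (x : Fin n → ℝ) : l2 x ^ 2 = sqnorm x := Real.sq_sqrt (sqnorm_nonneg x)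

lemma linf_nonneg {n : ℕ} (x : Fin n → ℝ) : 0 ≤ linf x :=
  Real.iSup_nonneg fun _ => abs_nonneg _

lemma abs_le_linf {n : ℕ} (x : Fin n → ℝ) (i : Fin n) : |x i| ≤ linf x :=
  le_ciSup (f := fun j => |x j|) (Set.finite_range _).bddAbove i

lemma dot_le_l1_mul_linf {n : ℕ} (x y : Fin n → ℝ) : dot x y ≤ l1 x * linf y := by
  rw [l1, Finset.sum_mul]
  refine Finset.sum_le_sum fun i _ => ?_
  calc x i * y i ≤ |x i| * |y i| := (le_abs_self _).trans (abs_mul _ _).le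
    _ ≤ |x i| * linf y := mul_le_mul_of_nonneg_left (abs_le_linf y i) (abs_nonneg _)

lemma mul_l2_le_of_mul_sqnorm_le {n : ℕ} {x : Fin n → ℝ} {r c : ℝ} (hc : 0 ≤ c)
    (h : r * sqnorm x ≤ c * l2 x) : r * l2 x ≤ c := by
  rcases (l2_nonneg x).eq_or_lt with h0 | hpos
  · rwa [← h0, mul_zero]
  refine le_of_mul_le_mul_right ?_ hpos
  rwa [mul_assoc, ← sq, l2_sq]

lemma l1on_nonneg {n : ℕ} (S : Finset (Fin n)) (x : Fin n → ℝ) : 0 ≤ l1on S x :=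
  Finset.sum_nonneg fun _ _ => abs_nonneg _

lemma l1_nonneg {n : ℕ} (x : Fin n → ℝ) : 0 ≤ l1 x :=
  Finset.sum_nonneg fun _ _ => abs_nonneg _

lemma l1on_add_l1on_compl {n : ℕ} (S : Finset (Fin n)) (x : Fin n → ℝ) :
    l1on S x + l1on Sᶜ x = l1 x :=
  Finset.sum_add_sum_compl S _

lemma l1on_le_sqrt_card_mul_l2 {n : ℕ} (S : Finset (Fin n)) (x : Fin n → ℝ) :
    l1on S x ≤ Real.sqrt S.card * l2 x := by
  rw [l2, ← Real.sqrt_mul (Nat.cast_nonneg _), Real.le_sqrt (l1on_nonneg S x)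
    (mul_nonneg (Nat.cast_nonneg _) (sqnorm_nonneg x))]
  calc l1on S x ^ 2 ≤ S.card * ∑ i ∈ S, |x i| ^ 2 := sq_sum_le_card_mul_sum_sq
    _ ≤ S.card * sqnorm x := by
      simp only [sq_abs]
      exact mul_le_mul_of_nonneg_left (Finset.sum_le_sum_of_subset_of_nonneg
        (Finset.subset_univ S) fun i _ _ => sq_nonneg _) (Nat.cast_nonneg _)

lemma l0_sub_le {n : ℕ} (x y : Fin n → ℝ) :
    l0 (x - y) ≤ (supp y).card + l0on (supp y)ᶜ x := by
  refine (Finset.card_le_card fun i hi => ?_).trans (Finset.card_union_le _ _)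
  by_cases hy : y i = 0
  · refine Finset.mem_union_right _ (Finset.mem_filter.mpr ⟨by simp [supp, hy], ?_⟩)
    simpa [supp, hy] using hi
  · exact Finset.mem_union_left _ (by simp [supp, hy])

lemma rhoMinus_mul_sqnorm_le {m n : ℕ} (A : Matrix (Fin m) (Fin n) ℝ) {s : ℕ}
    {x : Fin n → ℝ} (hx : l0 x ≤ s) : rhoMinus A s * sqnorm x ≤ sqnorm (A *ᵥ x) := by
  by_cases hx0 : x = 0
  · simp [hx0, sqnorm]
  have hpos : 0 < sqnorm x := by
    obtain ⟨i, hi⟩ := Function.ne_iff.mp hx0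
    exact Finset.sum_pos' (fun j _ => sq_nonneg _) ⟨i, Finset.mem_univ i, sq_pos_of_ne_zero hi⟩
  rw [← le_div_iff₀ hpos]
  refine csInf_le ⟨0, ?_⟩ ⟨x, hx0, hx, rfl⟩
  rintro r ⟨y, -, -, rfl⟩
  exact div_nonneg (sqnorm_nonneg _) (sqnorm_nonneg _)

namespace IsSubgrad

variable {n : ℕ} {x ξ : Fin n → ℝ}

lemma sign (x : Fin n → ℝ) : IsSubgrad x fun i => Real.sign (x i) :=
  fun i => ⟨fun _ => rfl, fun hx => by simp [hx]⟩

lemma abs_le_one (h : IsSubgrad x ξ) (i : Fin n) : |ξ i| ≤ 1 := by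
  by_cases hx : x i = 0
  · exact (h i).2 hx
  · rw [(h i).1 hx]
    rcases lt_or_gt_of_ne hx with hneg | hpos
    · simp [Real.sign_of_neg hneg]
    · simp [Real.sign_of_pos hpos]

lemma mul_eq_abs (h : IsSubgrad x ξ) (i : Fin n) : x i * ξ i = |x i| := by
  by_cases hx : x i = 0
  · simp [hx]
  · rw [(h i).1 hx]
    rcases lt_or_gt_of_ne hx with hneg | hpos
    · rw [Real.sign_of_neg hneg, abs_of_neg hneg, mul_neg_one]
    · rw [Real.sign_of_pos hpos, abs_of_pos hpos, mul_one]

lemma l1on_compl_sub_l1on_le_dot (hξ : IsSubgrad x ξ) {S : Finset (Fin n)} {h : Fin n → ℝ}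
    (hS : ∀ i ∉ S, h i = x i) : l1on Sᶜ h - l1on S h ≤ dot h ξ := by
  have hon : -l1on S h ≤ ∑ i ∈ S, h i * ξ i := by
    rw [l1on, ← Finset.sum_neg_distrib]
    refine Finset.sum_le_sum fun i _ => neg_le_of_abs_le ?_
    rw [abs_mul]
    exact mul_le_of_le_one_right (abs_nonneg _) (hξ.abs_le_one i)
  have hoff : ∑ i ∈ Sᶜ, h i * ξ i = l1on Sᶜ h := Finset.sum_congr rfl fun i hi => by
    rw [hS i (Finset.mem_compl.mp hi), hξ.mul_eq_abs]
  rw [dot, ← Finset.sum_add_sum_compl S, hoff]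
  linarith

end IsSubgrad

lemma le_csInf_mul {s : Set ℝ} (hs : s.Nonempty) {a t : ℝ} (ht : 0 ≤ t)
    (h : ∀ r ∈ s, a ≤ r * t) : a ≤ sInf s * t := by
  rcases ht.eq_or_lt with rfl | htpos
  · obtain ⟨r, hr⟩ := hs
    simpa using h r hr
  · rw [← div_le_iff₀ htpos]
    exact le_csInf hs fun r hr => (div_le_iff₀ htpos).mpr (h r hr)

lemma sqnorm_mulVec_sub_le_omega {m n : ℕ} (A : Matrix (Fin m) (Fin n) ℝ) {b : Fin m → ℝ}
    {xbar : Fin n → ℝ} (hb : b = A *ᵥ xbar) {lam : ℝ} (hlam : 0 ≤ lam) (x : Fin n → ℝ) :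
    sqnorm (A *ᵥ (x - xbar)) ≤
      lam * (l1on (supp xbar) (x - xbar) - l1on (supp xbar)ᶜ (x - xbar)) +
        omega A b lam x * l1 (x - xbar) := by
  set h := x - xbar
  rw [← sub_le_iff_le_add', omega]
  refine le_csInf_mul ?_ (l1_nonneg h) ?_
  · exact ⟨_, _, IsSubgrad.sign x, rfl⟩
  rintro r ⟨ξ, hξ, rfl⟩
  have hgrad : sqnorm (A *ᵥ h) = dot h (grad A b x) := by
    rw [grad, dot_transpose_mulVec, hb, ← mulVec_sub, dot_self]
  have hoff : ∀ i ∉ supp xbar, h i = x i := fun i hi => by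
    simp only [supp, Finset.mem_filter, Finset.mem_univ, true_and, not_not] at hi
    simp [h, hi]
  have hsign := mul_le_mul_of_nonneg_left (hξ.l1on_compl_sub_l1on_le_dot hoff) hlam
  have hres := dot_le_l1_mul_linf h fun i => grad A b x i + lam * ξ i
  rw [dot_add_const_mul] at hres
  linarith

theorem stmt18_general {m n : ℕ} (A : Matrix (Fin m) (Fin n) ℝ) (b : Fin m → ℝ)
    (xbar : Fin n → ℝ) (hb : b = A.mulVec xbar)
    (dp : ℝ) (hdp1 : dp < 1)
    (st : ℕ)
    (hrho : 0 < rhoMinus A ((supp xbar).card + st))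
    (eta : ℝ) (heta0 : 0 < eta) (K : ℕ)
    (xhat : Fin n → ℝ) (hsp : l0on (supp xbar)ᶜ xhat ≤ st)
    (homega : omega A b (eta ^ (K + 1) * linf (Aᵀ.mulVec b)) xhat ≤
      dp * (eta ^ (K + 1) * linf (Aᵀ.mulVec b))) :
    l2 (xhat - xbar) ≤
      eta ^ (K + 1) * (2 * linf (Aᵀ.mulVec b) * Real.sqrt ((supp xbar).card : ℝ)) /
        rhoMinus A ((supp xbar).card + st) := by
  set S := supp xbar
  set lam := eta ^ (K + 1) * linf (Aᵀ *ᵥ b)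
  set h := xhat - xbar
  have hlam : 0 ≤ lam := mul_nonneg (pow_nonneg heta0.le _) (linf_nonneg _)
  have hRE : rhoMinus A (S.card + st) * sqnorm h ≤ sqnorm (A *ᵥ h) :=
    rhoMinus_mul_sqnorm_le A ((l0_sub_le xhat xbar).trans (Nat.add_le_add_left hsp _))
  have hAh : sqnorm (A *ᵥ h) ≤ 2 * lam * l1on S h := by
    have hres := sqnorm_mulVec_sub_le_omega A hb hlam xhat
    rw [← l1on_add_l1on_compl S h] at hres
    have ha := l1on_nonneg S h
    have hc := l1on_nonneg Sᶜ h
    have hω := mul_le_mul_of_nonneg_right homega (add_nonneg ha hc)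
    nlinarith [mul_nonneg (mul_nonneg (sub_nonneg.2 hdp1.le) hlam) (add_nonneg ha hc)]
  have hbound : rhoMinus A (S.card + st) * l2 h ≤ 2 * lam * Real.sqrt S.card := by
    refine mul_l2_le_of_mul_sqnorm_le (by positivity) ?_
    calc rhoMinus A (S.card + st) * sqnorm h ≤ 2 * lam * l1on S h := hRE.trans hAh
      _ ≤ 2 * lam * (Real.sqrt S.card * l2 h) :=
          mul_le_mul_of_nonneg_left (l1on_le_sqrt_card_mul_l2 S h) (by positivity)
      _ = 2 * lam * Real.sqrt S.card * l2 h := by ring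
  rw [le_div_iff₀ hrho]
  linarith

theorem stmt18 {m n : ℕ} (A : Matrix (Fin m) (Fin n) ℝ) (b : Fin m → ℝ)
    (xbar : Fin n → ℝ) (hb : b = A.mulVec xbar)
    (dp gam : ℝ) (hdp0 : 0 < dp) (hdp1 : dp < 1)
    (hgam : gam > (1 + dp) / (1 - dp))
    (st : ℕ) (hst : 1 ≤ st)
    (hrho : 0 < rhoMinus A ((supp xbar).card + st))
    (hlam0 : 0 < linf (Aᵀ.mulVec b))
    (eta : ℝ) (heta0 : 0 < eta) (heta1 : eta < 1) (K : ℕ)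
    (xhat : Fin n → ℝ) (hsp : l0on (supp xbar)ᶜ xhat ≤ st)
    (homega : omega A b (eta ^ (K + 1) * linf (Aᵀ.mulVec b)) xhat ≤
      dp * (eta ^ (K + 1) * linf (Aᵀ.mulVec b))) :
    l2 (xhat - xbar) ≤
      eta ^ (K + 1) * (2 * linf (Aᵀ.mulVec b) * Real.sqrt ((supp xbar).card : ℝ)) /
        rhoMinus A ((supp xbar).card + st) :=
  stmt18_general A b xbar hb dp hdp1 st hrho eta heta0 K xhat hsp homega

end PGH
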